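/- arXiv:2506.04206 — 2 statements merged into one kernel-verified Lean document; each statement's English description precedes it below -/
import Mathlib

section
/- Let T be the integral operator on functions on [0,1] with kernel W(x,y) = x·y, i.e., (Tf)(x) = ∫_0^1 x·y·f(y) dy, and let 𝟙 denote the constant function 1. Then for every integer j ≥ 1 and every x ∈ [0,1], (T^j 𝟙)(x) = x/(2·3^{j−1}); moreover, for every α ∈ (0,3) and every x ∈ [0,1], the Katz series converges and ∑_{j=1}^∞ α^j (T^j 𝟙)(x) = 3αx/(2(3−α)), so that 1 + ∑_{j=1}^∞ α^j (T^j 𝟙)(x) = ((6−2α) + 3αx)/(6−2α), a positive scalar multiple of the paper's Katz centrality formula C^k_α(x) = (6−2α) + 3αx. -/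
/-! The kernel `x·y` has rank one, so `T` maps every function to a multiple of `x ↦ x`, on which
it acts as multiplication by `∫₀¹ y² dy = 1/3`. Hence the Katz series is geometric with ratio
`α / 3`. -/

open MeasureTheory

noncomputable def T (f : ℝ → ℝ) : ℝ → ℝ :=
  fun x => ∫ y in Set.Icc (0 : ℝ) 1, x * y * f y

theorem T_apply (f : ℝ → ℝ) (x : ℝ) : T f x = x * ∫ y in Set.Icc (0 : ℝ) 1, y * f y := by
  simp only [T, mul_assoc, integral_const_mul]

theorem integral_Icc_zero_one_pow (n : ℕ) : ∫ y in Set.Icc (0 : ℝ) 1, y ^ n = 1 / (n + 1) := by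
  rw [integral_Icc_eq_integral_Ioc, ← intervalIntegral.integral_of_le zero_le_one,
    integral_pow]
  simp

theorem T_const_one : T (fun _ => 1) = fun x => x / 2 := by
  funext x
  have h := integral_Icc_zero_one_pow 1
  simp only [pow_one] at h
  rw [T_apply]
  simp only [mul_one, h]
  ring

theorem T_mul_const (c : ℝ) : T (fun y => y * c) = fun x => x * c / 3 := by
  funext x
  have h := integral_Icc_zero_one_pow 2
  rw [T_apply]
  simp only [← mul_assoc, ← sq, integral_mul_const, h]
  ring

theorem iterate_T_const_one (j : ℕ) : T^[j + 1] (fun _ => 1) = fun x => x / (2 * 3 ^ j) := by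
  induction j with
  | zero => simpa using T_const_one
  | succ n ih =>
    rw [Function.iterate_succ_apply', ih]
    have h : (fun x : ℝ => x / (2 * 3 ^ n)) = fun x => x * (1 / (2 * 3 ^ n)) := by
      funext x; ring
    rw [h, T_mul_const]
    funext x
    ring

theorem hasSum_pow_succ_mul_div (α x : ℝ) (hα : |α| < 3) :
    HasSum (fun j : ℕ => α ^ (j + 1) * (x / (2 * 3 ^ j))) (3 * α * x / (2 * (3 - α))) := by
  have hr : |α / 3| < 1 := by
    rw [abs_div, abs_of_pos (three_pos : (0 : ℝ) < 3), div_lt_one three_pos]; exact hα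
  have h3 : (3 : ℝ) - α ≠ 0 := by linarith [le_abs_self α]
  have hterm : ∀ j : ℕ, α ^ (j + 1) * (x / (2 * 3 ^ j)) = α * x / 2 * (α / 3) ^ j := by
    intro j; rw [div_pow]; field_simp; ring
  have hsum : 3 * α * x / (2 * (3 - α)) = α * x / 2 * (1 - α / 3)⁻¹ := by
    rw [one_sub_div three_ne_zero, inv_div]; field_simp
  rw [funext hterm, hsum]
  exact (hasSum_geometric_of_abs_lt_one hr).mul_left _

/-- Katz centrality of the graphon `W(x,y) = x·y`: `(T^j 𝟙)(x) = x / (2·3^{j−1})` for all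
`j ≥ 1`, and for `α ∈ (0,3)` the Katz series converges with
`∑_{j≥1} α^j (T^j 𝟙)(x) = 3αx / (2(3−α))`, so that
`1 + ∑_{j≥1} α^j (T^j 𝟙)(x) = ((6−2α) + 3αx)/(6−2α)`, a positive scalar multiple of the
paper's Katz centrality formula `C^k_α(x) = (6−2α) + 3αx`. -/
theorem katz_centrality_xy :
    (∀ j : ℕ, 1 ≤ j → ∀ x ∈ Set.Icc (0 : ℝ) 1,
      (T^[j] (fun _ => 1)) x = x / (2 * 3 ^ (j - 1))) ∧
    ∀ α ∈ Set.Ioo (0 : ℝ) 3, ∀ x ∈ Set.Icc (0 : ℝ) 1,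
      HasSum (fun j : ℕ => α ^ (j + 1) * (T^[j + 1] (fun _ => 1)) x)
        (3 * α * x / (2 * (3 - α))) ∧
      1 + 3 * α * x / (2 * (3 - α)) = ((6 - 2 * α) + 3 * α * x) / (6 - 2 * α) := by
  refine ⟨fun j hj x _ => ?_, fun α ⟨hα0, hα3⟩ x _ => ⟨?_, ?_⟩⟩
  · obtain ⟨n, rfl⟩ := Nat.exists_add_one_eq.mpr hj
    simp [iterate_T_const_one]
  · simp only [iterate_T_const_one]
    exact hasSum_pow_succ_mul_div α x (by rw [abs_of_pos hα0]; exact hα3)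
  · have h : (6 : ℝ) - 2 * α ≠ 0 := by linarith
    rw [eq_div_iff h, add_mul, show 2 * (3 - α) = 6 - 2 * α by ring, div_mul_cancel₀ _ h]
    ring
end

section
/- Let β ∈ [0,1) and define C : [0,1] → ℝ by C(x) = (1−β) + 2βx. Then C satisfies the graphon PageRank fixed-point equation for the graphon W(x,y) = x·y with degree function d(y) = ∫_0^1 W(y,z) dz = y/2: for every x ∈ [0,1], C(x) = (1−β) + β ∫_{(0,1]} ( (x·y) · C(y) / (y/2) ) dy, where the integrand equals 2x·C(y) for y ∈ (0,1]. -/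
open MeasureTheory

theorem mul_mul_div_half_eq {K : Type*} [Field K] [NeZero (2 : K)] {y : K} (hy : y ≠ 0)
    (x c : K) : x * y * c / (y / 2) = 2 * x * c := by
  field_simp

theorem integral_zero_one_add_mul (a b : ℝ) : ∫ y in (0 : ℝ)..1, (a + b * y) = a + b / 2 := by
  rw [intervalIntegral.integral_add intervalIntegrable_const
      ((continuous_const_mul b).intervalIntegrable 0 1),
    intervalIntegral.integral_const_mul, integral_id]
  simp only [intervalIntegral.integral_const, sub_zero, one_smul]
  ring

theorem pagerank_centrality_xy_general (β : ℝ) :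
    (∀ y ∈ Set.Ioc (0 : ℝ) 1, ∀ x : ℝ,
      (x * y) * ((1 - β) + 2 * β * y) / (y / 2) = 2 * x * ((1 - β) + 2 * β * y)) ∧
    ∀ x ∈ Set.Icc (0 : ℝ) 1,
      (1 - β) + 2 * β * x =
        (1 - β) + β * ∫ y in Set.Ioc (0 : ℝ) 1,
          (x * y) * ((1 - β) + 2 * β * y) / (y / 2) := by
  have integrand_eq : ∀ y ∈ Set.Ioc (0 : ℝ) 1, ∀ x : ℝ,
      (x * y) * ((1 - β) + 2 * β * y) / (y / 2) = 2 * x * ((1 - β) + 2 * β * y) :=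
    fun y hy x => mul_mul_div_half_eq hy.1.ne' x _
  refine ⟨integrand_eq, fun x _ => ?_⟩
  rw [setIntegral_congr_fun measurableSet_Ioc (fun y hy => integrand_eq y hy x),
    ← intervalIntegral.integral_of_le zero_le_one, intervalIntegral.integral_const_mul,
    integral_zero_one_add_mul]
  ring

/-- PageRank centrality of the graphon `W(x,y) = x·y` with degree function `d(y) = y/2`:
the function `C(x) = (1−β) + 2βx` satisfies the graphon PageRank fixed-point equation
`C(x) = (1−β) + β ∫_{(0,1]} W(x,y)·C(y)/d(y) dy`, whose integrand equals `2x·C(y)` on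
`(0,1]`. -/
theorem pagerank_centrality_xy (β : ℝ) (hβ : β ∈ Set.Ico (0 : ℝ) 1) :
    (∀ y ∈ Set.Ioc (0 : ℝ) 1, ∀ x : ℝ,
      (x * y) * ((1 - β) + 2 * β * y) / (y / 2) = 2 * x * ((1 - β) + 2 * β * y)) ∧
    ∀ x ∈ Set.Icc (0 : ℝ) 1,
      (1 - β) + 2 * β * x =
        (1 - β) + β * ∫ y in Set.Ioc (0 : ℝ) 1,
          (x * y) * ((1 - β) + 2 * β * y) / (y / 2) :=
  pagerank_centrality_xy_general β
end
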